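/- Let $b, s, k$ be positive integers and set $D = (4bs-1)^{2k} + (b(4bs-1)^{2k} - s)^2$. Then $D$ is a positive non-square integer and the fundamental period of the regular continued fraction expansion of $\sqrt{D}$ has length $6k + 1$. -/

import Mathlib

/-!
Put `N = 4bs - 1`, `M = N ^ m` and `A = bM - s`, so that `D = M + A²` and `A² < D < (A + 1)²`.
Every complete quotient of `√D` has the form `(P + √D) / Q` with integers `P, Q`, and one step
of the expansion is the integer recursion `P' = aQ - P`, `QQ' = D - P'²`. Whenever `M = N t v`,
three steps with partial quotients `2bv - 1, 1, 2bt - 1` lead from `(A + √D) / (N t)` to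
`(A + √D) / t`. Starting from the first complete quotient `(A + √D) / M` and taking `v = N ^ j`
for `j = 0, …, m - 1`, one reaches `A + √D` after `3m` steps; its partial quotient is `2A`
and the next complete quotient is again `(A + √D) / M`. All the earlier partial quotients are
smaller than `2A`, so no shorter period exists. The theorem is the case `m = 2k`.
-/

/-- The Gauss-map iterates of `x`: `cfX x 0 = x` and
`cfX x (n+1) = 1 / (cfX x n - ⌊cfX x n⌋)`. -/
noncomputable def cfX (x : ℝ) : ℕ → ℝ
  | 0 => x
  | n + 1 => (cfX x n - ⌊cfX x n⌋)⁻¹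

/-- The `n`-th partial quotient of the regular continued fraction of `x`. -/
noncomputable def cfA (x : ℝ) (n : ℕ) : ℤ := ⌊cfX x n⌋

/-- `p` is a period (from index `1` on) of the continued fraction expansion of `x`. -/
def cfPeriod (x : ℝ) (p : ℕ) : Prop :=
  0 < p ∧ ∀ n, 1 ≤ n → cfA x (n + p) = cfA x n

open Real

theorem cfX_add (x : ℝ) (m n : ℕ) : cfX x (m + n) = cfX (cfX x m) n := by
  induction n with
  | zero => rfl
  | succ n ih => rw [← add_assoc, cfX, cfX, ih]

theorem cfPeriod_of_cfX_eq {x : ℝ} {p : ℕ} (hp : 0 < p) (h : cfX x (1 + p) = cfX x 1) :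
    cfPeriod x p := by
  refine ⟨hp, fun n hn => ?_⟩
  obtain ⟨m, rfl⟩ := Nat.exists_eq_add_of_le hn
  rw [cfA, cfA, add_right_comm, cfX_add, h, ← cfX_add]

theorem le_of_cfPeriod {x : ℝ} {p q : ℕ} (hp : cfPeriod x p)
    (hq : ∀ n, 1 ≤ n → n < q → cfA x n < cfA x q) : q ≤ p := by
  by_contra! hpq
  have hp0 := hp.1
  have hrep := hp.2 (q - p) (by omega)
  rw [Nat.sub_add_cancel hpq.le] at hrep
  exact (hq (q - p) (by omega) (by omega)).ne hrep.symm

theorem Int.not_isSquare_of_sq_lt_of_lt_sq {A D : ℤ} (hlo : A ^ 2 < D) (hhi : D < (A + 1) ^ 2) :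
    ¬ IsSquare D := by
  have hA : 0 ≤ A := by nlinarith
  rintro ⟨t, rfl⟩
  rw [← sq, sq_lt_sq] at hlo hhi
  rw [abs_of_nonneg hA] at hlo
  rw [abs_of_nonneg (by omega : 0 ≤ A + 1)] at hhi
  omega

noncomputable def quadSurd (D P Q : ℤ) : ℝ := (P + √(D : ℝ)) / Q

/-- Given `⌊√D⌋ = A`, the conditions `hle` and `hlt` force `a = ⌊(P + √D) / Q⌋`. -/
theorem cfA_eq_and_cfX_succ_eq {x : ℝ} {n : ℕ} {D A P Q a P' Q' : ℤ}
    (hlo : A ^ 2 < D) (hhi : D < (A + 1) ^ 2) (hx : cfX x n = quadSurd D P Q)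
    (hQ : 0 < Q) (hQ' : 0 < Q') (hP' : P' = a * Q - P) (hQQ' : Q * Q' = D - P' ^ 2)
    (hle : P' ≤ A) (hlt : A + 1 ≤ (a + 1) * Q - P) :
    cfA x n = a ∧ cfX x (n + 1) = quadSurd D P' Q' := by
  have hA : 0 ≤ A := by nlinarith
  have hsqrt_lo : (A : ℝ) < √D := lt_sqrt_of_sq_lt (by exact_mod_cast hlo)
  have hsqrt_hi : √D < A + 1 := (sqrt_lt' (by positivity)).2 (by exact_mod_cast hhi)
  have hsqrt_sq : √D ^ 2 = D := sq_sqrt (by exact_mod_cast (by nlinarith : (0 : ℤ) ≤ D))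
  have hQR : (0 : ℝ) < Q := by exact_mod_cast hQ
  have hP'R : (P' : ℝ) = a * Q - P := by exact_mod_cast hP'
  have hQQ'R : (Q * Q' : ℝ) = D - P' ^ 2 := by exact_mod_cast hQQ'
  have hleR : (P' : ℝ) ≤ A := by exact_mod_cast hle
  have hltR : (A + 1 : ℝ) ≤ (a + 1) * Q - P := by exact_mod_cast hlt
  have hfloor : cfA x n = a := by
    rw [cfA, hx, quadSurd, Int.floor_eq_iff, le_div_iff₀ hQR, div_lt_iff₀ hQR]
    constructor <;> linarith
  refine ⟨hfloor, ?_⟩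
  have hgap : √D - P' ≠ 0 := by linarith
  have hfrac : (P + √D) / Q - a = (√D - P') / Q := by rw [hP'R]; field_simp; ring
  rw [cfX, ← cfA, hfloor, hx, quadSurd, quadSurd, hfrac, inv_div,
    div_eq_div_iff hgap (by positivity)]
  linear_combination hQQ'R - hsqrt_sq

section FloorSqrt

variable {A D : ℤ}

theorem cfX_sqrt_one (hlo : A ^ 2 < D) (hhi : D < (A + 1) ^ 2) :
    cfX √D 1 = quadSurd D A (D - A ^ 2) :=
  (cfA_eq_and_cfX_succ_eq (n := 0) (P := 0) (Q := 1) (a := A) hlo hhi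
    (by simp [cfX, quadSurd]) one_pos (by linarith) (by ring) (by ring) le_rfl (by linarith)).2

theorem cfA_eq_two_mul_and_cfX_succ_eq {x : ℝ} {n : ℕ} (hlo : A ^ 2 < D) (hhi : D < (A + 1) ^ 2)
    (hx : cfX x n = quadSurd D A 1) :
    cfA x n = 2 * A ∧ cfX x (n + 1) = quadSurd D A (D - A ^ 2) :=
  cfA_eq_and_cfX_succ_eq hlo hhi hx one_pos (by linarith) (by ring) (by ring) le_rfl
    (by linarith)

end FloorSqrt

section Family

variable {b s N A D : ℤ}

theorem sq_lt_and_lt_add_one_sq {M : ℤ} (hb : 1 ≤ b) (hs : 1 ≤ s) (hN : N = 4 * b * s - 1)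
    (hM : N ≤ M) (hA : A = b * M - s) (hD : D = M + A ^ 2) :
    A ^ 2 < D ∧ D < (A + 1) ^ 2 := by
  have hM₁ : 4 * s - 1 ≤ M := by nlinarith
  have hM₂ : M ≤ b * M := by nlinarith
  subst hD hA
  constructor <;> nlinarith

theorem cfA_cfX_block {x : ℝ} {n : ℕ} {t v : ℤ} (hb : 1 ≤ b) (hs : 1 ≤ s)
    (hN : N = 4 * b * s - 1) (ht : 1 ≤ t) (hv : 1 ≤ v)
    (hA : A = b * (N * t * v) - s) (hD : D = N * t * v + A ^ 2)
    (hx : cfX x n = quadSurd D A (N * t)) :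
    cfA x n = 2 * b * v - 1 ∧ cfA x (n + 1) = 1 ∧ cfA x (n + 2) = 2 * b * t - 1 ∧
      cfX x (n + 3) = quadSurd D A t := by
  have hN2s : 2 * s + 1 ≤ N := by nlinarith
  have hNt : N ≤ N * t := by nlinarith
  have hNv : N ≤ N * v := by nlinarith
  have hNtv : N * t ≤ N * t * v := by nlinarith
  obtain ⟨hlo, hhi⟩ := sq_lt_and_lt_add_one_sq hb hs hN (hNt.trans hNtv) hA hD
  obtain ⟨ha₁, hx₁⟩ := cfA_eq_and_cfX_succ_eq (a := 2 * b * v - 1) (P' := A + 2 * s - N * t)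
    (Q' := 2 * A + 4 * s - N * t - N * v) hlo hhi hx (by nlinarith) (by nlinarith)
    (by linear_combination 2 * hA) (by subst hD hA hN; ring) (by linarith) (by nlinarith)
  have hlt₂ : A + 1 ≤ (1 + 1) * (2 * A + 4 * s - N * t - N * v) - (A + 2 * s - N * t) := by
    have hgap : (1 + 1) * (2 * A + 4 * s - N * t - N * v) - (A + 2 * s - N * t) - (A + 1) =
        2 * (b - 1) * (N * t * v - 2 * s) + N * ((t - 1) * (2 * v - 1)) := by
      subst hA hN; ring
    have h₁ : 0 ≤ (b - 1) * (N * t * v - 2 * s) := mul_nonneg (by linarith) (by nlinarith)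
    have h₂ : 0 ≤ N * ((t - 1) * (2 * v - 1)) :=
      mul_nonneg (by linarith) (mul_nonneg (by linarith) (by linarith))
    linarith
  obtain ⟨ha₂, hx₂⟩ := cfA_eq_and_cfX_succ_eq (P' := A + 2 * s - N * v) (Q' := N * v)
    hlo hhi hx₁ (by nlinarith) (by nlinarith) (by ring) (by subst hD hA hN; ring) (by linarith)
    hlt₂
  obtain ⟨ha₃, hx₃⟩ := cfA_eq_and_cfX_succ_eq (a := 2 * b * t - 1) (P' := A) (Q' := t)
    hlo hhi hx₂ (by nlinarith) (by linarith) (by linear_combination 2 * hA)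
    (by subst hD; ring) le_rfl (by nlinarith)
  exact ⟨ha₁, ha₂, ha₃, hx₃⟩

variable {m : ℕ}

theorem cfA_cfX_pow_block {x : ℝ} {n j : ℕ} (hb : 1 ≤ b) (hs : 1 ≤ s)
    (hN : N = 4 * b * s - 1)
    (hA : A = b * N ^ m - s) (hD : D = N ^ m + A ^ 2) (hj : j < m)
    (hx : cfX x n = quadSurd D A (N ^ (m - j))) :
    cfA x n = 2 * b * N ^ j - 1 ∧ cfA x (n + 1) = 1 ∧
      cfA x (n + 2) = 2 * b * N ^ (m - (j + 1)) - 1 ∧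
      cfX x (n + 3) = quadSurd D A (N ^ (m - (j + 1))) := by
  have hN₁ : 1 ≤ N := by nlinarith
  have hsplit : N ^ m = N * N ^ (m - (j + 1)) * N ^ j := by
    rw [← pow_succ', ← pow_add]; congr 1; omega
  have hsplit' : N ^ (m - j) = N * N ^ (m - (j + 1)) := by
    rw [← pow_succ']; congr 1; omega
  rw [hsplit] at hA hD
  rw [hsplit'] at hx
  exact cfA_cfX_block hb hs hN (one_le_pow₀ hN₁) (one_le_pow₀ hN₁) hA hD hx

theorem cfX_sqrt_three_mul_add_one (hb : 1 ≤ b) (hs : 1 ≤ s) (hN : N = 4 * b * s - 1)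
    (hm : 1 ≤ m) (hA : A = b * N ^ m - s) (hD : D = N ^ m + A ^ 2) {j : ℕ} (hj : j ≤ m) :
    cfX √D (3 * j + 1) = quadSurd D A (N ^ (m - j)) := by
  induction j with
  | zero =>
    have hN₁ : 1 ≤ N := by nlinarith
    obtain ⟨hlo, hhi⟩ :=
      sq_lt_and_lt_add_one_sq hb hs hN (le_self_pow₀ hN₁ (by omega)) hA hD
    rw [cfX_sqrt_one hlo hhi, Nat.sub_zero, hD, add_sub_cancel_right]
  | succ j ih =>
    rw [show 3 * (j + 1) + 1 = 3 * j + 1 + 3 by ring]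
    exact (cfA_cfX_pow_block hb hs hN hA hD hj (ih (by omega))).2.2.2

theorem two_mul_mul_pow_sub_one_lt (hb : 1 ≤ b) (hs : 1 ≤ s) (hN : N = 4 * b * s - 1)
    (hA : A = b * N ^ m - s) {j : ℕ} (hj : j < m) : 2 * b * N ^ j - 1 < 2 * A := by
  have hN₁ : 1 ≤ N := by nlinarith
  have hpow : N * N ^ j ≤ N ^ m := by
    rw [← pow_succ']; exact pow_le_pow_right₀ hN₁ hj
  have hgap : 2 * s ≤ N ^ j * (N - 1) := by nlinarith [one_le_pow₀ (n := j) hN₁]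
  have hgap' : N ^ j * (N - 1) ≤ b * (N ^ j * (N - 1)) := by nlinarith
  nlinarith

theorem cfA_sqrt_lt (hb : 1 ≤ b) (hs : 1 ≤ s) (hN : N = 4 * b * s - 1)
    (hm : 1 ≤ m) (hA : A = b * N ^ m - s) (hD : D = N ^ m + A ^ 2) {n : ℕ} (hn₁ : 1 ≤ n)
    (hn : n ≤ 3 * m) : cfA √D n < 2 * A := by
  obtain ⟨j, i, hi, rfl⟩ : ∃ j i, i < 3 ∧ n = 3 * j + 1 + i :=
    ⟨(n - 1) / 3, (n - 1) % 3, by omega⟩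
  have hj : j < m := by omega
  obtain ⟨ha₁, ha₂, ha₃, -⟩ :=
    cfA_cfX_pow_block hb hs hN hA hD hj (cfX_sqrt_three_mul_add_one hb hs hN hm hA hD hj.le)
  interval_cases i
  · rw [add_zero, ha₁]; exact two_mul_mul_pow_sub_one_lt hb hs hN hA hj
  · have h₀ := two_mul_mul_pow_sub_one_lt (j := 0) hb hs hN hA (by omega)
    rw [pow_zero] at h₀
    rw [ha₂]; linarith
  · rw [ha₃]; exact two_mul_mul_pow_sub_one_lt hb hs hN hA (by omega)

theorem isLeast_cfPeriod_sqrt (hb : 1 ≤ b) (hs : 1 ≤ s) (hN : N = 4 * b * s - 1)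
    (hm : 1 ≤ m) (hA : A = b * N ^ m - s) (hD : D = N ^ m + A ^ 2) :
    IsLeast {p | cfPeriod √D p} (3 * m + 1) := by
  have hN₁ : 1 ≤ N := by nlinarith
  obtain ⟨hlo, hhi⟩ := sq_lt_and_lt_add_one_sq hb hs hN (le_self_pow₀ hN₁ (by omega)) hA hD
  have hx := cfX_sqrt_three_mul_add_one hb hs hN hm hA hD le_rfl
  rw [Nat.sub_self, pow_zero] at hx
  obtain ⟨ha, hx'⟩ := cfA_eq_two_mul_and_cfX_succ_eq hlo hhi hx
  refine ⟨cfPeriod_of_cfX_eq (by omega) ?_, fun p hp => le_of_cfPeriod hp fun n hn₁ hn => ?_⟩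
  · rw [add_comm 1, hx', cfX_sqrt_one hlo hhi]
  · rw [ha]; exact cfA_sqrt_lt hb hs hN hm hA hD hn₁ (by omega)

end Family

/-- Corollary c6: for `D = (4bs-1)^{2k} + (b(4bs-1)^{2k} - s)^2`,
`D` is a positive non-square integer and the fundamental period of the
continued fraction of `√D` has length `6k + 1`. -/
theorem period_c6 (b s k : ℕ) (hb : 0 < b) (hs : 0 < s) (hk : 0 < k) :
    let D : ℤ := (4 * (b : ℤ) * s - 1) ^ (2 * k) +
      ((b : ℤ) * (4 * (b : ℤ) * s - 1) ^ (2 * k) - s) ^ 2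
    0 < D ∧ ¬ IsSquare D ∧
      IsLeast {p : ℕ | cfPeriod (Real.sqrt (D : ℝ)) p} (6 * k + 1) := by
  intro D
  have hb' : (1 : ℤ) ≤ b := by exact_mod_cast hb
  have hs' : (1 : ℤ) ≤ s := by exact_mod_cast hs
  have hN₁ : (1 : ℤ) ≤ 4 * b * s - 1 := by nlinarith
  obtain ⟨hlo, hhi⟩ :=
    sq_lt_and_lt_add_one_sq (M := (4 * (b : ℤ) * s - 1) ^ (2 * k)) (D := D) hb' hs' rfl
      (le_self_pow₀ hN₁ (by omega)) rfl rfl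
  refine ⟨(sq_nonneg _).trans_lt hlo, Int.not_isSquare_of_sq_lt_of_lt_sq hlo hhi, ?_⟩
  rw [show 6 * k + 1 = 3 * (2 * k) + 1 by ring]
  exact isLeast_cfPeriod_sqrt hb' hs' rfl (by omega) rfl rfl
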